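/- Reduction correctness for acyclic digraphs: Given a (3,B2)-SAT instance with variables x_1,...,x_n (each literal occurring exactly twice) and clauses C_1,...,C_m, construct the two-scenario robust flow network of Theorem 5 (variable vertices v_1,...,v_{n+1}, clause vertices u_1,...,u_m, literal gadget paths p_i and p̄_i with fixed literal arcs, capacities 1, costs 0; scenario 1 sends one unit from v_1 to v_{n+1}, scenario 2 sends 2n units from v_1 to the clause vertices u_j (one unit each) and vertex t (2n-m units)). Then the SAT instance is satisfiable if and only if there exists an integral robust b-flow in the constructed network (equivalently, one of cost at most 0). -/

import Mathlib

open Finset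

structure Net (V A : Type) where
  src : A → V
  dst : A → V
  isFixed : A → Bool
  u : A → ℤ
  c : A → ℤ

variable {V A : Type} [Fintype V] [Fintype A] [DecidableEq V]

def excess (N : Net V A) (f : A → ℤ) (v : V) : ℤ :=
  ∑ a ∈ univ.filter (fun a => N.src a = v), f a -
    ∑ a ∈ univ.filter (fun a => N.dst a = v), f a

def IsFlow (N : Net V A) (b : V → ℤ) (f : A → ℤ) : Prop :=
  (∀ a, 0 ≤ f a ∧ f a ≤ N.u a) ∧ ∀ v, excess N f v = b v

def IsRobust {Λ : Type} (N : Net V A) (b : Λ → V → ℤ) (f : Λ → A → ℤ) : Prop :=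
  (∀ lam, IsFlow N (b lam) (f lam)) ∧
    ∀ lam lam' a, N.isFixed a = true → f lam a = f lam' a

/-! ## The construction of Theorem 5.

A `(3,B2)`-SAT instance with `n` variables and `m` clauses is encoded by a bijection
`e : Fin m × Fin 3 ≃ Fin n × Bool × Fin 2` between clause slots and literal
occurrences: `e (j, slot) = (i, pol, k)` means that the `k`-th occurrence of the
literal `x_i` (if `pol = true`) resp. `¬x_i` (if `pol = false`) fills the
`slot`-th position of clause `C_j`.  (Each clause has exactly 3 literals and each
literal occurs exactly twice.)

Vertices: the variable vertices `v_1,…,v_{n+1}` (`Fin (n+1)`), the clause vertices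
`u_1,…,u_m` (`Fin m`), the auxiliary vertices `w_i^1,…,w_i^4`, `w̄_i^1,…,w̄_i^4`
(`Fin n × Bool × Fin 4`, 0-indexed) and the auxiliary sink `t` (`Unit`). -/

abbrev SatV (n m : ℕ) := Fin (n + 1) ⊕ Fin m ⊕ (Fin n × Bool × Fin 4) ⊕ Unit

/-- Arcs: path arcs of the literal paths `p_i`, `p̄_i` (segments `0,…,4`), clause arcs
`(w^{2k+1}, u_j)`, source arcs `(v_1, w^{2k})`, and sink arcs `(w^{2k+1}, t)`. -/
abbrev SatA (n m : ℕ) :=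
  (Fin n × Bool × Fin 5) ⊕ (Fin m × Fin 3) ⊕ (Fin n × Bool × Fin 2) ⊕ (Fin n × Bool × Fin 2)

def wVert (n m : ℕ) (i : Fin n) (pol : Bool) (k : Fin 4) : SatV n m :=
  Sum.inr (Sum.inr (Sum.inl (i, pol, k)))

def pathSrc (n m : ℕ) (i : Fin n) (pol : Bool) (ℓ : Fin 5) : SatV n m :=
  if h : ℓ.val = 0 then Sum.inl i.castSucc
  else wVert n m i pol ⟨ℓ.val - 1, by omega⟩

def pathDst (n m : ℕ) (i : Fin n) (pol : Bool) (ℓ : Fin 5) : SatV n m :=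
  if h : ℓ.val = 4 then Sum.inl i.succ
  else wVert n m i pol ⟨ℓ.val, by omega⟩

def satNet (n m : ℕ) (e : Fin m × Fin 3 ≃ Fin n × Bool × Fin 2) :
    Net (SatV n m) (SatA n m) where
  src a :=
    match a with
    | Sum.inl (i, pol, ℓ) => pathSrc n m i pol ℓ
    | Sum.inr (Sum.inl js) =>
        wVert n m (e js).1 (e js).2.1 ⟨2 * ((e js).2.2 : ℕ) + 1, by omega⟩
    | Sum.inr (Sum.inr (Sum.inl _)) => Sum.inl 0
    | Sum.inr (Sum.inr (Sum.inr (i, pol, k))) =>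
        wVert n m i pol ⟨2 * (k : ℕ) + 1, by omega⟩
  dst a :=
    match a with
    | Sum.inl (i, pol, ℓ) => pathDst n m i pol ℓ
    | Sum.inr (Sum.inl (j, _)) => Sum.inr (Sum.inl j)
    | Sum.inr (Sum.inr (Sum.inl (i, pol, k))) =>
        wVert n m i pol ⟨2 * (k : ℕ), by omega⟩
    | Sum.inr (Sum.inr (Sum.inr _)) => Sum.inr (Sum.inr (Sum.inr ()))
  isFixed a :=
    match a with
    | Sum.inl (_, _, ℓ) => decide (ℓ.val = 1 ∨ ℓ.val = 3)
    | _ => false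
  u _ := 1
  c _ := 0

/-- Balances: scenario `0` sends one unit from `v_1` to `v_{n+1}`; scenario `1`
sends `2n` units from `v_1`: one unit to each clause vertex and `2n - m` units to `t`. -/
def satB (n m : ℕ) : Fin 2 → SatV n m → ℤ := fun lam v =>
  if lam = 0 then
    match v with
    | Sum.inl i => if i = 0 then 1 else if i = Fin.last n then -1 else 0
    | _ => 0
  else
    match v with
    | Sum.inl i => if i = 0 then 2 * n else 0
    | Sum.inr (Sum.inl _) => -1
    | Sum.inr (Sum.inr (Sum.inl _)) => 0
    | Sum.inr (Sum.inr (Sum.inr _)) => (m : ℤ) - 2 * n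

/-! In scenario `0` of a robust flow the clause and sink arcs carry nothing (their heads have
no out-arcs and no demand), so flow can only grow along a literal path; the single unit from
`v_1` to `v_{n+1}` then allows at most one of `p_i`, `p̄_i` to carry flow. In scenario `1` every
clause vertex receives its unit from the odd vertex `w^{2k+1}` of some occurrence, which forces
flow on the fixed arc entering that vertex, hence on the same arc in scenario `0`. So the
literals whose paths carry scenario-`0` flow satisfy every clause. Conversely, a satisfying
assignment `σ` together with a true literal chosen in each clause gives the two flows: scenario
`0` follows the paths of the true literals, and scenario `1` sends a unit from `v_1` over each
fixed arc of a true literal and then to the clause that chose this occurrence, or else to `t`. -/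

theorem Fin.sum_ite_castSucc_eq {n : ℕ} (i0 : Fin (n + 1)) :
    ∑ i : Fin n, (if i.castSucc = i0 then (1 : ℤ) else 0) = if i0 = Fin.last n then 0 else 1 := by
  induction i0 using Fin.lastCases with
  | last => simp [Fin.castSucc_ne_last]
  | cast i0 => simp [Fin.castSucc_ne_last]

theorem Fin.sum_ite_succ_eq {n : ℕ} (i0 : Fin (n + 1)) :
    ∑ i : Fin n, (if i.succ = i0 then (1 : ℤ) else 0) = if i0 = 0 then 0 else 1 := by
  induction i0 using Fin.cases with
  | zero => simp [Fin.succ_ne_zero]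
  | succ i0 => simp [Fin.succ_ne_zero]

theorem Fin.exists_eq_two_mul_or_two_mul_add_one (k : Fin 4) :
    ∃ k' : Fin 2, k = ⟨2 * k', by omega⟩ ∨ k = ⟨2 * k' + 1, by omega⟩ :=
  ⟨⟨k / 2, by omega⟩, by simp only [Fin.ext_iff]; omega⟩

theorem excess_eq_sum_ite {V A : Type} [Fintype A] [DecidableEq V] (N : Net V A) (f : A → ℤ)
    (v : V) :
    excess N f v = ∑ a, (if N.src a = v then f a else 0) - ∑ a, if N.dst a = v then f a else 0 := by
  simp only [excess, Finset.sum_filter]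

theorem excess_eq_of_incidence {V A : Type} [Fintype A] [DecidableEq V] {N : Net V A} {v : V}
    {outs ins : Finset A} (hout : ∀ a, N.src a = v ↔ a ∈ outs) (hin : ∀ a, N.dst a = v ↔ a ∈ ins)
    (f : A → ℤ) : excess N f v = ∑ a ∈ outs, f a - ∑ a ∈ ins, f a := by
  unfold excess
  congr 1 <;> apply Finset.sum_congr ?_ (fun _ _ => rfl) <;> ext a <;> simp [hout, hin]

namespace SatNet

variable {n m : ℕ}

-- The four-fold sum exceeds the default `synthInstance.maxSize`.
set_option synthInstance.maxSize 256 in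
instance : DecidableEq (SatA n m) := inferInstance

abbrev varVert (i : Fin (n + 1)) : SatV n m := Sum.inl i
abbrev clauseVert (j : Fin m) : SatV n m := Sum.inr (Sum.inl j)
abbrev sinkVert : SatV n m := Sum.inr (Sum.inr (Sum.inr ()))

abbrev pathArc (i : Fin n) (pol : Bool) (ℓ : Fin 5) : SatA n m := Sum.inl (i, pol, ℓ)
abbrev clauseArc (js : Fin m × Fin 3) : SatA n m := Sum.inr (Sum.inl js)
abbrev sourceArc (o : Fin n × Bool × Fin 2) : SatA n m := Sum.inr (Sum.inr (Sum.inl o))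
abbrev sinkArc (o : Fin n × Bool × Fin 2) : SatA n m := Sum.inr (Sum.inr (Sum.inr o))

theorem vertex_cases (v : SatV n m) :
    (∃ i0, v = varVert i0) ∨ (∃ j, v = clauseVert j) ∨
      (∃ i pol, ∃ k : Fin 2, v = wVert n m i pol ⟨2 * k, by omega⟩) ∨
      (∃ i pol, ∃ k : Fin 2, v = wVert n m i pol ⟨2 * k + 1, by omega⟩) ∨ v = sinkVert := by
  rcases v with i0 | j | ⟨i, pol, k⟩ | ⟨⟩
  · exact Or.inl ⟨i0, rfl⟩
  · exact Or.inr (Or.inl ⟨j, rfl⟩)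
  · obtain ⟨k, rfl | rfl⟩ := Fin.exists_eq_two_mul_or_two_mul_add_one k
    · exact Or.inr (Or.inr (Or.inl ⟨i, pol, k, rfl⟩))
    · exact Or.inr (Or.inr (Or.inr (Or.inl ⟨i, pol, k, rfl⟩)))
  · exact Or.inr (Or.inr (Or.inr (Or.inr rfl)))

theorem wVert_inj {i i' : Fin n} {pol pol' : Bool} {k k' : Fin 4} :
    wVert n m i pol k = wVert n m i' pol' k' ↔ i = i' ∧ pol = pol' ∧ k = k' := by
  simp [wVert]

theorem pathSrc_eq_wVert {i i' : Fin n} {pol pol' : Bool} {ℓ : Fin 5} {k : Fin 4} :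
    pathSrc n m i pol ℓ = wVert n m i' pol' k ↔ i = i' ∧ pol = pol' ∧ ℓ = k.succ := by
  unfold pathSrc wVert
  split_ifs <;> simp [Fin.ext_iff] <;> omega

theorem pathDst_eq_wVert {i i' : Fin n} {pol pol' : Bool} {ℓ : Fin 5} {k : Fin 4} :
    pathDst n m i pol ℓ = wVert n m i' pol' k ↔ i = i' ∧ pol = pol' ∧ ℓ = k.castSucc := by
  unfold pathDst wVert
  split_ifs <;> simp [Fin.ext_iff]
  omega

theorem pathSrc_eq_varVert {i : Fin n} {pol : Bool} {ℓ : Fin 5} {i0 : Fin (n + 1)} :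
    pathSrc n m i pol ℓ = varVert i0 ↔ ℓ = 0 ∧ i.castSucc = i0 := by
  unfold pathSrc wVert
  split_ifs with h <;> simp [Fin.ext_iff, h]

theorem pathDst_eq_varVert {i : Fin n} {pol : Bool} {ℓ : Fin 5} {i0 : Fin (n + 1)} :
    pathDst n m i pol ℓ = varVert i0 ↔ ℓ = 4 ∧ i.succ = i0 := by
  unfold pathDst wVert
  split_ifs with h <;> simp [Fin.ext_iff, h]

theorem pathSrc_ne_clauseVert {i : Fin n} {pol : Bool} {ℓ : Fin 5} {j : Fin m} :
    pathSrc n m i pol ℓ ≠ clauseVert j := by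
  unfold pathSrc wVert; split_ifs <;> simp

theorem pathDst_ne_clauseVert {i : Fin n} {pol : Bool} {ℓ : Fin 5} {j : Fin m} :
    pathDst n m i pol ℓ ≠ clauseVert j := by
  unfold pathDst wVert; split_ifs <;> simp

theorem pathSrc_ne_sinkVert {i : Fin n} {pol : Bool} {ℓ : Fin 5} :
    pathSrc n m i pol ℓ ≠ sinkVert := by
  unfold pathSrc wVert; split_ifs <;> simp

theorem pathDst_ne_sinkVert {i : Fin n} {pol : Bool} {ℓ : Fin 5} :
    pathDst n m i pol ℓ ≠ sinkVert := by
  unfold pathDst wVert; split_ifs <;> simp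

section Excess

variable (e : Fin m × Fin 3 ≃ Fin n × Bool × Fin 2) (f : SatA n m → ℤ)

theorem excess_varVert (i0 : Fin (n + 1)) :
    excess (satNet n m e) f (varVert i0) =
      ∑ i : Fin n, (if i.castSucc = i0 then ∑ pol, f (pathArc i pol 0) else 0)
        + (if i0 = 0 then ∑ o, f (sourceArc o) else 0)
        - ∑ i : Fin n, if i.succ = i0 then ∑ pol, f (pathArc i pol 4) else 0 := by
  simp only [excess_eq_sum_ite, Fintype.sum_sum_type]
  simp only [satNet, pathSrc_eq_varVert, pathDst_eq_varVert, Fintype.sum_prod_type, ite_and]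
  simp [wVert, Finset.sum_ite_eq', eq_comm]

theorem excess_clauseVert (j : Fin m) :
    excess (satNet n m e) f (clauseVert j) = -∑ slot, f (clauseArc (j, slot)) := by
  simp only [excess_eq_sum_ite, Fintype.sum_sum_type]
  simp [satNet, pathSrc_ne_clauseVert, pathDst_ne_clauseVert, wVert, Fintype.sum_prod_type_right]

theorem excess_sinkVert :
    excess (satNet n m e) f sinkVert = -∑ o, f (sinkArc o) := by
  simp only [excess_eq_sum_ite, Fintype.sum_sum_type]
  simp [satNet, pathSrc_ne_sinkVert, pathDst_ne_sinkVert, wVert]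

theorem excess_wVert_even (i : Fin n) (pol : Bool) (k : Fin 2) :
    excess (satNet n m e) f (wVert n m i pol ⟨2 * k, by omega⟩) =
      f (pathArc i pol ⟨2 * k + 1, by omega⟩) - f (pathArc i pol ⟨2 * k, by omega⟩)
        - f (sourceArc (i, pol, k)) := by
  rw [excess_eq_of_incidence (outs := {pathArc i pol ⟨2 * k + 1, by omega⟩})
    (ins := ({pathArc i pol ⟨2 * k, by omega⟩, sourceArc (i, pol, k)} : Finset (SatA n m)))]
  · simp [sub_sub]
  all_goals
    rintro (⟨i', pol', ℓ⟩ | js | ⟨i', pol', k'⟩ | ⟨i', pol', k'⟩) <;>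
    simp only [satNet, pathSrc_eq_wVert, pathDst_eq_wVert, wVert_inj] <;>
    simp [wVert, Prod.ext_iff, Fin.ext_iff] <;> omega

theorem excess_wVert_odd (i : Fin n) (pol : Bool) (k : Fin 2) :
    excess (satNet n m e) f (wVert n m i pol ⟨2 * k + 1, by omega⟩) =
      f (pathArc i pol ⟨2 * k + 2, by omega⟩) + f (clauseArc (e.symm (i, pol, k)))
        + f (sinkArc (i, pol, k)) - f (pathArc i pol ⟨2 * k + 1, by omega⟩) := by
  rw [excess_eq_of_incidence (outs := ({pathArc i pol ⟨2 * k + 2, by omega⟩,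
      clauseArc (e.symm (i, pol, k)), sinkArc (i, pol, k)} : Finset (SatA n m)))
    (ins := {pathArc i pol ⟨2 * k + 1, by omega⟩})]
  · simp [add_assoc]
  all_goals
    rintro (⟨i', pol', ℓ⟩ | js | ⟨i', pol', k'⟩ | ⟨i', pol', k'⟩) <;>
    simp only [satNet, pathSrc_eq_wVert, pathDst_eq_wVert, wVert_inj] <;>
    simp [wVert, Equiv.eq_symm_apply, Prod.ext_iff, Fin.ext_iff] <;> omega

end Excess

def litValue (σ : Fin n → Bool) (i : Fin n) (pol : Bool) : ℤ := if pol = σ i then 1 else 0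

def slotValue (s : Fin m → Fin 3) (js : Fin m × Fin 3) : ℤ := if js.2 = s js.1 then 1 else 0

theorem sum_litValue (σ : Fin n → Bool) (i : Fin n) : ∑ pol, litValue σ i pol = 1 := by
  cases h : σ i <;> simp [litValue, h]

theorem sum_litValue_occurrences (σ : Fin n → Bool) :
    ∑ o : Fin n × Bool × Fin 2, litValue σ o.1 o.2.1 = 2 * n := by
  simp only [Fintype.sum_prod_type, Finset.sum_const, Finset.card_univ, Fintype.card_fin,
    ← Finset.smul_sum, sum_litValue]
  simp [mul_comm]

theorem sum_slotValue_symm (e : Fin m × Fin 3 ≃ Fin n × Bool × Fin 2) (s : Fin m → Fin 3) :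
    ∑ o : Fin n × Bool × Fin 2, slotValue s (e.symm o) = m := by
  rw [e.symm.sum_comp (slotValue s), Fintype.sum_prod_type]
  simp [slotValue]

theorem slotValue_symm_le_litValue {e : Fin m × Fin 3 ≃ Fin n × Bool × Fin 2}
    {σ : Fin n → Bool} {s : Fin m → Fin 3} (hs : ∀ j, σ (e (j, s j)).1 = (e (j, s j)).2.1)
    (o : Fin n × Bool × Fin 2) : slotValue s (e.symm o) ≤ litValue σ o.1 o.2.1 := by
  unfold slotValue litValue
  split_ifs with hslot hlit <;> try simp
  have h := hs (e.symm o).1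
  rw [← hslot, Prod.mk.eta, e.apply_symm_apply] at h
  exact hlit h.symm

def truthPathFlow (σ : Fin n → Bool) : SatA n m → ℤ
  | Sum.inl (i, pol, _) => litValue σ i pol
  | _ => 0

def coverFlow (e : Fin m × Fin 3 ≃ Fin n × Bool × Fin 2) (σ : Fin n → Bool) (s : Fin m → Fin 3) :
    SatA n m → ℤ
  | Sum.inl (i, pol, ℓ) => if ℓ.val = 1 ∨ ℓ.val = 3 then litValue σ i pol else 0
  | Sum.inr (Sum.inl js) => slotValue s js
  | Sum.inr (Sum.inr (Sum.inl (i, pol, _))) => litValue σ i pol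
  | Sum.inr (Sum.inr (Sum.inr o)) => litValue σ o.1 o.2.1 - slotValue s (e.symm o)

section Forward

variable (e : Fin m × Fin 3 ≃ Fin n × Bool × Fin 2)

theorem isFlow_truthPathFlow (hn : 0 < n) (σ : Fin n → Bool) :
    IsFlow (satNet n m e) (satB n m 0) (truthPathFlow σ) := by
  refine ⟨fun a => ?_, fun v => ?_⟩
  · rcases a with ⟨i, pol, ℓ⟩ | _ | _ | _ <;> simp [truthPathFlow, litValue, satNet]
    split_ifs <;> simp
  rcases vertex_cases v with ⟨i0, rfl⟩ | ⟨j, rfl⟩ | ⟨i, pol, k, rfl⟩ | ⟨i, pol, k, rfl⟩ | rfl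
  · have hlast : (0 : Fin (n + 1)) ≠ Fin.last n := by simp [Fin.ext_iff]; omega
    rw [excess_varVert]
    simp only [truthPathFlow, sum_litValue, Fin.sum_ite_castSucc_eq, Fin.sum_ite_succ_eq]
    by_cases h0 : i0 = 0
    · simp [satB, h0, hlast]
    · by_cases hl : i0 = Fin.last n <;> simp [satB, h0, hl, hn.ne']
  · simp [excess_clauseVert, truthPathFlow, satB]
  · rw [excess_wVert_even]; simp [truthPathFlow, satB, wVert]
  · rw [excess_wVert_odd]; simp [truthPathFlow, satB, wVert]
  · simp [excess_sinkVert, truthPathFlow, satB]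

theorem isFlow_coverFlow {σ : Fin n → Bool} {s : Fin m → Fin 3}
    (hs : ∀ j, σ (e (j, s j)).1 = (e (j, s j)).2.1) :
    IsFlow (satNet n m e) (satB n m 1) (coverFlow e σ s) := by
  refine ⟨fun a => ?_, fun v => ?_⟩
  · have hcap : (satNet n m e).u a = 1 := rfl
    rcases a with ⟨i, pol, ℓ⟩ | js | o | o
    · simp only [hcap, coverFlow, litValue]; split_ifs <;> simp
    · simp only [hcap, coverFlow, slotValue]; split_ifs <;> simp
    · simp only [hcap, coverFlow, litValue]; split_ifs <;> simp
    · have hle := slotValue_symm_le_litValue hs o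
      simp only [hcap, coverFlow]
      unfold litValue slotValue at *
      split_ifs at * <;> simp_all
  rcases vertex_cases v with ⟨i0, rfl⟩ | ⟨j, rfl⟩ | ⟨i, pol, k, rfl⟩ | ⟨i, pol, k, rfl⟩ | rfl
  · rw [excess_varVert]
    simp [coverFlow, satB, sum_litValue_occurrences]
  · simp [excess_clauseVert, coverFlow, satB, slotValue]
  · rw [excess_wVert_even]; fin_cases k <;> simp [coverFlow, satB, wVert]
  · rw [excess_wVert_odd]; fin_cases k <;> simp [coverFlow, satB, wVert]
  · simp [excess_sinkVert, coverFlow, satB, sum_litValue_occurrences, sum_slotValue_symm]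

theorem coverFlow_eq_truthPathFlow_of_isFixed {σ : Fin n → Bool} {s : Fin m → Fin 3}
    {a : SatA n m} (ha : (satNet n m e).isFixed a = true) :
    coverFlow e σ s a = truthPathFlow σ a := by
  rcases a with ⟨i, pol, ℓ⟩ | _ | _ | _
  · have hℓ : ℓ.val = 1 ∨ ℓ.val = 3 := by simpa [satNet] using ha
    simp [coverFlow, truthPathFlow, hℓ]
  all_goals simp [satNet] at ha

theorem isRobust_of_satisfying (hn : 0 < n) {σ : Fin n → Bool} {s : Fin m → Fin 3}
    (hs : ∀ j, σ (e (j, s j)).1 = (e (j, s j)).2.1) :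
    IsRobust (satNet n m e) (satB n m) ![truthPathFlow σ, coverFlow e σ s] := by
  refine ⟨fun lam => ?_, fun lam lam' a ha => ?_⟩
  · fin_cases lam
    · exact isFlow_truthPathFlow e hn σ
    · exact isFlow_coverFlow e hs
  · have := coverFlow_eq_truthPathFlow_of_isFixed e (σ := σ) (s := s) ha
    fin_cases lam <;> fin_cases lam' <;> simp [this]

end Forward

section Backward

variable {e : Fin m × Fin 3 ≃ Fin n × Bool × Fin 2}

section ScenarioZero

variable {g : SatA n m → ℤ}

theorem clauseArc_eq_zero_of_isFlow_zero (hg : IsFlow (satNet n m e) (satB n m 0) g)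
    (js : Fin m × Fin 3) : g (clauseArc js) = 0 := by
  have h := hg.2 (clauseVert js.1)
  rw [excess_clauseVert] at h
  have hsum : ∑ slot, g (clauseArc (js.1, slot)) = 0 := by simpa [satB] using h
  exact (Finset.sum_eq_zero_iff_of_nonneg fun slot _ => (hg.1 _).1).1 hsum js.2 (mem_univ _)

theorem sinkArc_eq_zero_of_isFlow_zero (hg : IsFlow (satNet n m e) (satB n m 0) g)
    (o : Fin n × Bool × Fin 2) : g (sinkArc o) = 0 := by
  have h := hg.2 sinkVert
  rw [excess_sinkVert] at h
  have hsum : ∑ o, g (sinkArc o) = 0 := by simpa [satB] using h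
  exact (Finset.sum_eq_zero_iff_of_nonneg fun o _ => (hg.1 _).1).1 hsum o (mem_univ _)

theorem monotone_pathArc_of_isFlow_zero (hg : IsFlow (satNet n m e) (satB n m 0) g)
    (i : Fin n) (pol : Bool) : Monotone fun ℓ => g (pathArc i pol ℓ) := by
  rw [Fin.monotone_iff_le_succ]
  intro ℓ
  obtain ⟨k, rfl | rfl⟩ := Fin.exists_eq_two_mul_or_two_mul_add_one ℓ
  · have h := hg.2 (wVert n m i pol ⟨2 * k, by omega⟩)
    rw [excess_wVert_even] at h
    have := (hg.1 (sourceArc (i, pol, k))).1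
    simp [satB, wVert] at h
    show g (pathArc i pol ⟨2 * k, _⟩) ≤ g (pathArc i pol ⟨2 * k + 1, _⟩)
    linarith
  · have h := hg.2 (wVert n m i pol ⟨2 * k + 1, by omega⟩)
    rw [excess_wVert_odd, clauseArc_eq_zero_of_isFlow_zero hg,
      sinkArc_eq_zero_of_isFlow_zero hg] at h
    simp [satB, wVert] at h
    show g (pathArc i pol ⟨2 * k + 1, _⟩) ≤ g (pathArc i pol ⟨2 * k + 2, _⟩)
    linarith

theorem sum_pathArc_le_one_of_isFlow_zero (hn : 0 < n)
    (hg : IsFlow (satNet n m e) (satB n m 0) g) (i : Fin n) (ℓ : Fin 5) :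
    ∑ pol, g (pathArc i pol ℓ) ≤ 1 := by
  cases n with
  | zero => exact absurd hn (lt_irrefl 0)
  | succ n =>
  have hpath := monotone_pathArc_of_isFlow_zero hg
  let G (i : Fin (n + 1)) := ∑ pol, g (pathArc i pol 4)
  have hmono : Monotone G := by
    rw [Fin.monotone_iff_le_succ]
    intro j
    have h := hg.2 (varVert j.succ.castSucc)
    rw [excess_varVert] at h
    simp [satB] at h
    simp only [Fin.succ_castSucc, Fin.castSucc_inj, Finset.sum_ite_eq', mem_univ, if_true] at h
    have h0 (pol : Bool) := hpath j.succ pol (Fin.zero_le 4)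
    simp only [G, Fintype.sum_bool]
    linarith [h0 true, h0 false]
  have hlast : G (Fin.last n) = 1 := by
    have h := hg.2 (varVert (Fin.last (n + 1)))
    rw [excess_varVert] at h
    simp [satB] at h
    simp only [G, Fintype.sum_bool]
    linarith
  calc ∑ pol, g (pathArc i pol ℓ) ≤ G i :=
        Finset.sum_le_sum fun pol _ => hpath i pol (Fin.le_last ℓ)
    _ ≤ G (Fin.last n) := hmono (Fin.le_last i)
    _ = 1 := hlast

end ScenarioZero

variable {f : Fin 2 → SatA n m → ℤ}

theorem clauseArc_le_pathArc_three (hf : IsRobust (satNet n m e) (satB n m) f)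
    (o : Fin n × Bool × Fin 2) : f 1 (clauseArc (e.symm o)) ≤ f 0 (pathArc o.1 o.2.1 3) := by
  obtain ⟨i, pol, k⟩ := o
  have h := (hf.1 1).2 (wVert n m i pol ⟨2 * k + 1, by omega⟩)
  rw [excess_wVert_odd] at h
  simp [satB, wVert] at h
  have hfixed : f 1 (pathArc i pol ⟨2 * k + 1, by omega⟩)
      = f 0 (pathArc i pol ⟨2 * k + 1, by omega⟩) :=
    hf.2 1 0 _ (by simp [satNet]; omega)
  have hmono := monotone_pathArc_of_isFlow_zero (hf.1 0) i pol
    (show (⟨2 * k + 1, by omega⟩ : Fin 5) ≤ 3 by simp [Fin.le_def]; omega)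
  have := ((hf.1 1).1 (pathArc i pol ⟨2 * k + 2, by omega⟩)).1
  have := ((hf.1 1).1 (sinkArc (i, pol, k))).1
  simp only at hmono ⊢
  linarith

theorem exists_satisfying_of_isRobust (hn : 0 < n) (hf : IsRobust (satNet n m e) (satB n m) f) :
    ∃ σ : Fin n → Bool, ∀ j, ∃ slot, σ (e (j, slot)).1 = (e (j, slot)).2.1 := by
  refine ⟨fun i => decide (0 < f 0 (pathArc i true 3)), fun j => ?_⟩
  have hu := (hf.1 1).2 (clauseVert j)
  rw [excess_clauseVert] at hu
  obtain ⟨slot, -, hpos⟩ := Finset.exists_lt_of_sum_lt (s := univ) (f := fun _ => (0 : ℤ))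
    (g := fun slot => f 1 (clauseArc (j, slot))) (by simp [satB] at hu ⊢; omega)
  refine ⟨slot, ?_⟩
  have h3 := clauseArc_le_pathArc_three hf (e (j, slot))
  rw [e.symm_apply_apply] at h3
  generalize e (j, slot) = o at h3 ⊢
  obtain ⟨i, pol, k⟩ := o
  have hle := sum_pathArc_le_one_of_isFlow_zero hn (hf.1 0) i 3
  have hnn := ((hf.1 0).1 (pathArc i (!pol) 3)).1
  cases pol <;> simp at hle hnn h3 ⊢ <;> omega

end Backward

end SatNet

/-- Theorem 5 of the paper, reduction correctness: the `(3,B2)`-SAT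
instance is satisfiable iff the constructed two-scenario network admits an integral
robust `b`-flow (equivalently, one of cost at most `0`, all costs being `0`). -/
theorem sat_reduction_correct (n m : ℕ) (hn : 0 < n)
    (e : Fin m × Fin 3 ≃ Fin n × Bool × Fin 2) :
    (∃ σ : Fin n → Bool, ∀ j : Fin m, ∃ slot : Fin 3,
        σ (e (j, slot)).1 = (e (j, slot)).2.1) ↔
    (∃ f : Fin 2 → SatA n m → ℤ, IsRobust (satNet n m e) (satB n m) f) := by
  constructor
  · rintro ⟨σ, hsat⟩
    choose s hs using hsat
    exact ⟨_, SatNet.isRobust_of_satisfying e hn hs⟩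
  · rintro ⟨f, hf⟩
    exact SatNet.exists_satisfying_of_isRobust hn hf
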